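/- arXiv:2007.00960 — 9 statements merged into one kernel-verified Lean document; each statement's English description precedes it below -/
import Mathlib

section
/- Let Γ be an infinite virtually cyclic group acting by homeomorphisms on a nonempty compact Hausdorff space X, and suppose the action has the marker property. Then the dynamic asymptotic dimension of the action equals 1; that is, (i) for every finite subset E ⊆ Γ there exist open sets U_0, U_1 covering X such that F(U_0, E) and F(U_1, E) are finite, and (ii) there exists a finite subset E ⊆ Γ such that F(X, E) is infinite (so no single open set works). -/
open Pointwise

/-- The set F(U,E): elements `g = gₙ⋯g₁` with each `gⱼ ∈ E` such that for some `x ∈ U`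
all partial translates `gⱼ⋯g₁ • x` (j = 1,…,n) remain in `U`. -/
def dynF {Γ X : Type*} [Group Γ] [MulAction Γ X] (U : Set X) (E : Set Γ) : Set Γ :=
  {g | ∃ L : List Γ, L ≠ [] ∧ (∀ h ∈ L, h ∈ E) ∧ g = L.reverse.prod ∧
    ∃ x ∈ U, ∀ j : ℕ, 1 ≤ j → j ≤ L.length → (L.take j).reverse.prod • x ∈ U}

/-- The marker property for an action. -/
def MarkerProperty (Γ X : Type*) [Group Γ] [MulAction Γ X] [TopologicalSpace X] : Prop :=
  ∀ F : Finset Γ, ∃ U : Set X, IsOpen U ∧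
    (F : Set Γ).PairwiseDisjoint (fun g => g • U) ∧ (⋃ g : Γ, g • U) = Set.univ

/-- The dynamic asymptotic dimension is at most `d`. -/
def DadLE (Γ X : Type*) [Group Γ] [MulAction Γ X] [TopologicalSpace X] (d : ℕ) : Prop :=
  ∀ E : Finset Γ, ∃ U : Fin (d + 1) → Set X, (∀ i, IsOpen (U i)) ∧
    (⋃ i, U i) = Set.univ ∧ ∀ i, (dynF (U i) (E : Set Γ)).Finite

/-- The dynamic asymptotic dimension, as an extended natural number (`⊤` if no `d` works). -/
noncomputable def dad (Γ X : Type*) [Group Γ] [MulAction Γ X] [TopologicalSpace X] : ℕ∞ :=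
  sInf ((fun d : ℕ => (d : ℕ∞)) '' {d : ℕ | DadLE Γ X d})

/-- A group is virtually cyclic if it has a cyclic subgroup of finite index. -/
def IsVirtuallyCyclic (Γ : Type*) [Group Γ] : Prop :=
  ∃ H : Subgroup Γ, IsCyclic H ∧ H.FiniteIndex

/-- The covering dimension of `X` is at most `n`: every open cover admits an open
refinement covering `X` in which every point belongs to at most `n+1` members. -/
def CovDimLE (X : Type*) [TopologicalSpace X] (n : ℕ) : Prop :=
  ∀ 𝒰 : Set (Set X), (∀ U ∈ 𝒰, IsOpen U) → ⋃₀ 𝒰 = Set.univ →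
    ∃ 𝒱 : Set (Set X), (∀ V ∈ 𝒱, IsOpen V) ∧ ⋃₀ 𝒱 = Set.univ ∧
      (∀ V ∈ 𝒱, ∃ U ∈ 𝒰, V ⊆ U) ∧
      ∀ x : X, ∃ s : Finset (Set X), {V ∈ 𝒱 | x ∈ V} ⊆ ↑s ∧ s.card ≤ n + 1

/-!
An infinite virtually cyclic group `Γ` contains an element `a` of infinite order such that
`⟨a⟩` is normal of finite index. Writing `g = aⁿ t` with `t` in a fixed transversal defines a
proper surjective height `Γ → ℤ` on which left multiplication by `u` acts, up to a bounded
error, as the isometry `n ↦ h u ± n` of `ℤ`.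

Take a marker set `V` whose translates by the elements of height `≤ 3ρ` are disjoint, and a
closed `C ⊆ V` finitely many translates of which cover `X`. Put `U₀ = {|h| ≤ ρ} • V` and
`U₁ = ({|h| ≤ ρ} • C)ᶜ`, where `ρ` bounds the height displacement of a step in `E`. Along a path
in `U₀` the marker of the starting point seen at height near `0` cannot change, because markers
of one point are far apart in height. Along a path in `U₁` two markers of the starting point
lying on either side of height `0` stay on opposite sides, because no marker comes within `ρ`
of `0`. Either way the end of the path has bounded height, and there are finitely many such
elements. Finally the powers of `a` make `F(X, {a})` infinite.
-/

open Subgroup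

theorem Int.abs_units_mul (s : ℤˣ) (n : ℤ) : |(s : ℤ) * n| = |n| := by
  rw [abs_mul, Int.isUnit_iff_abs_eq.1 s.isUnit, one_mul]

theorem Int.sign_units (s : ℤˣ) : Int.sign s = s := by
  rcases Int.units_eq_one_or s with rfl | rfl <;> rfl

theorem Int.sign_eq_sign_of_abs_sub_lt {x y : ℤ} (h : |x - y| < |y|) : x.sign = y.sign := by
  rcases lt_trichotomy y 0 with hy | rfl | hy
  · rw [abs_of_neg hy] at h
    rw [Int.sign_eq_neg_one_of_neg hy,
      Int.sign_eq_neg_one_of_neg (by linarith [le_abs_self (x - y)])]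
  · simp only [sub_zero, abs_zero] at h
    exact absurd h (abs_nonneg x).not_gt
  · rw [abs_of_pos hy] at h
    rw [Int.sign_eq_one_of_pos hy, Int.sign_eq_one_of_pos (by linarith [neg_abs_le (x - y)])]

theorem abs_le_abs_sub_of_mul_neg {α : Type*} [Ring α] [LinearOrder α] [IsStrictOrderedRing α]
    {a b : α} (hab : a * b < 0) : |a| ≤ |a - b| := by
  rcases mul_neg_iff.1 hab with ⟨ha, hb⟩ | ⟨ha, hb⟩
  · rw [abs_of_pos ha, abs_of_pos (sub_pos.2 (hb.trans ha))]
    exact (le_sub_self_iff a).2 hb.le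
  · rw [abs_of_neg ha, abs_of_neg (sub_neg.2 (ha.trans hb))]
    exact neg_le_neg (sub_le_self _ hb.le)

/-- A coarse height on `Γ`: up to the error `bound`, left multiplication by `u` acts on heights
as the isometry `n ↦ h u + twist u * n` of `ℤ`. -/
structure CoarseHeight (Γ : Type*) [Group Γ] where
  toFun : Γ → ℤ
  twist : Γ → ℤˣ
  bound : ℤ
  abs_map_mul_sub_le : ∀ u v, |toFun (u * v) - toFun u - twist u * toFun v| ≤ bound
  finite_setOf_abs_le : ∀ n : ℤ, {g | |toFun g| ≤ n}.Finite
  surjective : Function.Surjective toFun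

instance {Γ : Type*} [Group Γ] : CoeFun (CoarseHeight Γ) fun _ => Γ → ℤ := ⟨CoarseHeight.toFun⟩


theorem IsVirtuallyCyclic.exists_normal_zpowers {Γ : Type*} [Group Γ] [Infinite Γ]
    (hΓ : IsVirtuallyCyclic Γ) :
    ∃ a : Γ, ¬IsOfFinOrder a ∧ (zpowers a).Normal ∧ (zpowers a).FiniteIndex := by
  obtain ⟨H, hH, hfi⟩ := hΓ
  obtain ⟨a, ha⟩ := H.normalCore.isCyclic_iff_exists_zpowers_eq_top.1
    (isCyclic_of_le H.normalCore_le)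
  refine ⟨a, fun hfin => ?_, ha ▸ H.normalCore_normal, ha ▸ inferInstance⟩
  have : Finite H.normalCore := ha ▸ hfin.finite_zpowers.to_subtype
  have : Finite Γ := (finite_iff_finite_and_finiteIndex _).2 ⟨this, inferInstance⟩
  exact not_finite Γ

section ZPowersNormal

variable {Γ : Type*} [Group Γ] {a : Γ} [(zpowers a).Normal]

theorem exists_units_conj_zpow (ha : ¬IsOfFinOrder a) (g : Γ) :
    ∃ s : ℤˣ, ∀ m : ℤ, g * a ^ m * g⁻¹ = a ^ ((s : ℤ) * m) := by
  obtain ⟨s, hs⟩ := mem_zpowers_iff.1 (Normal.conj_mem ‹_› a (mem_zpowers a) g)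
  obtain ⟨t, ht⟩ := mem_zpowers_iff.1 (Normal.conj_mem ‹_› a (mem_zpowers a) g⁻¹)
  have hconj (m : ℤ) : g * a ^ m * g⁻¹ = a ^ (s * m) := by rw [← conj_zpow, ← hs, zpow_mul]
  have hst : s * t = 1 := injective_zpow_iff_not_isOfFinOrder.2 ha <| by
    show a ^ (s * t) = a ^ (1 : ℤ)
    rw [zpow_one, ← hconj, ht]; group
  exact ⟨Units.mkOfMulEqOne s t hst, hconj⟩

theorem exists_eq_zpow_mul :
    ∃ (φ : Γ → ℤ) (τ : Γ ⧸ zpowers a → Γ), ∀ g, g = a ^ φ g * τ g := by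
  have (g : Γ) : ∃ n : ℤ, g = a ^ n * (g : Γ ⧸ zpowers a).out := by
    obtain ⟨n, hn⟩ := mem_zpowers_iff.1 <|
      QuotientGroup.eq_iff_div_mem.1 (QuotientGroup.out_eq' (g : Γ ⧸ zpowers a)).symm
    exact ⟨n, by rw [hn, div_mul_cancel]⟩
  choose φ hφ using this
  exact ⟨φ, Quotient.out, hφ⟩

/-- The height of `g` is the exponent `n` in `g = a ^ n * t`, where `t` is the chosen
representative of the coset of `g`. -/
theorem nonempty_coarseHeight (ha : ¬IsOfFinOrder a) [(zpowers a).FiniteIndex] :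
    Nonempty (CoarseHeight Γ) := by
  obtain ⟨φ, τ, hφ⟩ := exists_eq_zpow_mul (a := a)
  choose σ hσ using exists_units_conj_zpow ha
  have hφ_zpow_mul (n : ℤ) (g : Γ) : φ (a ^ n * g) = n + φ g := by
    have hcoset : QuotientGroup.mk (s := zpowers a) (a ^ n * g) = g := by
      rw [QuotientGroup.mk_mul, (QuotientGroup.eq_one_iff _).2 (zpow_mem (mem_zpowers a) n),
        one_mul]
    have : a ^ n * g = a ^ (n + φ g) * τ (QuotientGroup.mk (a ^ n * g)) := by
      rw [hcoset, zpow_add, mul_assoc, ← hφ g]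
    exact injective_zpow_iff_not_isOfFinOrder.2 ha <| mul_right_cancel <| (hφ _).symm.trans this
  have hτ_mul_zpow (u : Γ) (m : ℤ) : τ u * a ^ m = a ^ (σ u * m : ℤ) * τ u := by
    have hτu : τ u = a ^ (-φ u) * u := by rw [zpow_neg, eq_inv_mul_iff_mul_eq, ← hφ u]
    calc τ u * a ^ m = a ^ (-φ u) * (u * a ^ m * u⁻¹) * u := by rw [hτu]; group
      _ = a ^ (σ u * m : ℤ) * τ u := by
        rw [hσ, hτu, ← mul_assoc, ← zpow_add, ← zpow_add, add_comm]
  have hφ_mul (u v : Γ) : φ (u * v) = φ u + σ u * φ v + φ (τ u * τ v) := by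
    have : u * v = a ^ (φ u + σ u * φ v) * (τ u * τ v) := by
      conv_lhs => rw [hφ u, hφ v]
      rw [mul_assoc, ← mul_assoc (τ u), hτ_mul_zpow, zpow_add]
      group
    rw [this, hφ_zpow_mul]
  obtain ⟨C, hC⟩ := Finite.exists_le
    fun q : (Γ ⧸ zpowers a) × (Γ ⧸ zpowers a) => |φ (τ q.1 * τ q.2)|
  refine ⟨⟨φ, σ, C, fun u v => ?_, fun n => ?_, fun m => ⟨a ^ (m - φ 1) * 1, ?_⟩⟩⟩
  · calc _ = |φ (τ u * τ v)| := by rw [hφ_mul]; ring_nf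
      _ ≤ C := hC (u, v)
  · refine ((Set.finite_Icc (-n) n).prod Set.finite_univ |>.image
      fun p : ℤ × (Γ ⧸ zpowers a) => a ^ p.1 * τ p.2).subset fun g hg => ?_
    exact ⟨(φ g, g), ⟨abs_le.1 hg, trivial⟩, (hφ g).symm⟩
  · rw [hφ_zpow_mul, sub_add_cancel]

end ZPowersNormal

namespace CoarseHeight

variable {Γ : Type*} [Group Γ] (h : CoarseHeight Γ)

theorem abs_map_one_le : |h 1| ≤ h.bound := by
  have := h.abs_map_mul_sub_le 1 1
  rwa [one_mul, sub_self, zero_sub, abs_neg, Int.abs_units_mul] at this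

theorem abs_map_mul_le (u v : Γ) : |h (u * v)| ≤ |h u| + |h v| + h.bound := by
  calc |h (u * v)| = |h u + h.twist u * h v + (h (u * v) - h u - h.twist u * h v)| := by ring_nf
    _ ≤ |h u| + |h.twist u * h v| + |h (u * v) - h u - h.twist u * h v| := abs_add_three _ _ _
    _ ≤ |h u| + |h v| + h.bound := by
      rw [Int.abs_units_mul]; linarith [h.abs_map_mul_sub_le u v]

theorem abs_map_left_le (u v : Γ) : |h u| ≤ |h (u * v)| + |h v| + h.bound := by
  calc |h u| = |h (u * v) - h.twist u * h v - (h (u * v) - h u - h.twist u * h v)| := by ring_nf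
    _ ≤ |h (u * v)| + |h.twist u * h v| + |h (u * v) - h u - h.twist u * h v| :=
      (abs_sub _ _).trans (add_le_add_left (abs_sub _ _) _)
    _ ≤ |h (u * v)| + |h v| + h.bound := by
      rw [Int.abs_units_mul]; linarith [h.abs_map_mul_sub_le u v]

theorem abs_map_right_le (u v : Γ) : |h v| ≤ |h (u * v)| + |h u| + h.bound := by
  calc |h v| = |h (u * v) - h u - (h (u * v) - h u - h.twist u * h v)| := by
        rw [← Int.abs_units_mul (h.twist u)]; ring_nf
    _ ≤ |h (u * v)| + |h u| + |h (u * v) - h u - h.twist u * h v| :=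
      (abs_sub _ _).trans (add_le_add_left (abs_sub _ _) _)
    _ ≤ |h (u * v)| + |h u| + h.bound := by linarith [h.abs_map_mul_sub_le u v]

theorem abs_map_mul_sub_map_mul_le (p u v : Γ) :
    |h (p * u) - h (p * v)| ≤ |h u - h v| + 2 * h.bound := by
  calc |h (p * u) - h (p * v)| = |h.twist p * (h u - h v) +
        (h (p * u) - h p - h.twist p * h u) - (h (p * v) - h p - h.twist p * h v)| := by ring_nf
    _ ≤ |h.twist p * (h u - h v)| + |h (p * u) - h p - h.twist p * h u| +
        |h (p * v) - h p - h.twist p * h v| :=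
      (abs_sub _ _).trans (add_le_add_left (abs_add_le _ _) _)
    _ ≤ |h u - h v| + 2 * h.bound := by
      rw [Int.abs_units_mul]; linarith [h.abs_map_mul_sub_le p u, h.abs_map_mul_sub_le p v]

theorem sign_map_mul {e u : Γ} (hu : |h e| + h.bound < |h u|) :
    (h (e * u)).sign = h.twist e * (h u).sign := by
  have : |h (e * u) - h.twist e * h u| < |h.twist e * h u| := by
    calc |h (e * u) - h.twist e * h u| = |h e + (h (e * u) - h e - h.twist e * h u)| := by ring_nf
      _ ≤ |h e| + h.bound := (abs_add_le _ _).trans (by linarith [h.abs_map_mul_sub_le e u])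
      _ < |h.twist e * h u| := by rwa [Int.abs_units_mul]
  rw [Int.sign_eq_sign_of_abs_sub_lt this, Int.sign_mul, Int.sign_units]

theorem map_mul_mul_map_mul_neg {e u v : Γ} (hu : |h e| + h.bound < |h u|)
    (hv : |h e| + h.bound < |h v|) (huv : h u * h v < 0) : h (e * u) * h (e * v) < 0 := by
  rw [← Int.sign_eq_neg_one_iff_neg, Int.sign_mul, h.sign_map_mul hu, h.sign_map_mul hv,
    mul_mul_mul_comm, ← Units.val_mul, Int.units_mul_self, Units.val_one, one_mul,
    ← Int.sign_mul, Int.sign_eq_neg_one_iff_neg]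
  exact huv

end CoarseHeight

section Dynamics

variable {Γ X : Type*} [Group Γ] [MulAction Γ X]

theorem dynF_induction {U : Set X} {E : Set Γ} (Q : X → Γ → Prop) (one : ∀ x ∈ U, Q x 1)
    (mul : ∀ x p e, e ∈ E → p • x ∈ U → (e * p) • x ∈ U → Q x p → Q x (e * p)) :
    ∀ g ∈ dynF U E, ∃ x ∈ U, Q x g := by
  rintro g ⟨L, -, hLE, rfl, x, hx, hpath⟩
  refine ⟨x, hx, ?_⟩
  suffices ∀ p, p • x ∈ U → Q x p →
      (∀ j, 1 ≤ j → j ≤ L.length → ((L.take j).reverse.prod * p) • x ∈ U) →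
      Q x (L.reverse.prod * p) by
    simpa using this 1 (by simpa) (one x hx) (by simpa using hpath)
  clear hpath
  induction L with
  | nil => simp +contextual
  | cons e L ih =>
    intro p hp hQ hpath
    have he : (e * p) • x ∈ U := by simpa using hpath 1 le_rfl (by simp)
    have := ih (fun k hk => hLE k (List.mem_cons_of_mem _ hk)) (e * p) he
      (mul x p e (hLE e List.mem_cons_self) hp he hQ)
      fun j hj1 hj => by simpa [mul_assoc] using hpath (j + 1) (by omega) (by simpa using hj)
    simpa [mul_assoc] using this

theorem pow_succ_mem_dynF_univ [Nonempty X] (a : Γ) (n : ℕ) :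
    a ^ (n + 1) ∈ dynF (Set.univ : Set X) {a} :=
  ⟨List.replicate (n + 1) a, by simp, fun _ hk => List.eq_of_mem_replicate hk, by simp,
    Classical.arbitrary X, trivial, fun _ _ _ => trivial⟩

theorem dynF_univ_singleton_infinite [Nonempty X] {a : Γ} (ha : ¬IsOfFinOrder a) :
    (dynF (Set.univ : Set X) {a}).Infinite :=
  Set.infinite_of_injective_forall_mem
    ((injective_pow_iff_not_isOfFinOrder.2 ha).comp Nat.succ_injective)
    (pow_succ_mem_dynF_univ a)

theorem eq_of_inv_smul_mem_of_pairwiseDisjoint {F : Set Γ} {V : Set X}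
    (hV : F.PairwiseDisjoint (· • V)) (hF1 : 1 ∈ F) {x : X} {w w' : Γ} (hw : w⁻¹ • x ∈ V)
    (hw' : w'⁻¹ • x ∈ V) (hF : w⁻¹ * w' ∈ F) : w = w' := by
  by_contra hne
  refine Set.disjoint_left.1 (hV hF hF1 fun h => hne (inv_mul_eq_one.1 h))
    (Set.smul_mem_smul_set (a := w⁻¹ * w') hw') ?_
  simpa [smul_smul] using hw

end Dynamics

theorem exists_isClosed_subset_finset_smul_eq_univ {Γ X : Type*} [Group Γ] [TopologicalSpace X]
    [CompactSpace X] [RegularSpace X] [MulAction Γ X] [ContinuousConstSMul Γ X] {V : Set X}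
    (hV : IsOpen V) (hcover : ⋃ g : Γ, g • V = Set.univ) :
    ∃ C ⊆ V, IsClosed C ∧ ∃ S : Finset Γ, (S : Set Γ) • C = Set.univ := by
  classical
  have hcov : Set.univ ⊆ ⋃ i : Γ × {N : Set X // IsClosed N ∧ N ⊆ V}, i.1 • interior i.2.1 := by
    intro x _
    obtain ⟨g, hg⟩ := Set.mem_iUnion.1 (hcover.symm ▸ Set.mem_univ x)
    rw [Set.mem_smul_set_iff_inv_smul_mem] at hg
    obtain ⟨N, hN, hNc, hNV⟩ := exists_mem_nhds_isClosed_subset (hV.mem_nhds hg)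
    exact Set.mem_iUnion.2 ⟨(g, ⟨N, hNc, hNV⟩),
      Set.mem_smul_set_iff_inv_smul_mem.2 (mem_interior_iff_mem_nhds.2 hN)⟩
  obtain ⟨t, ht⟩ := isCompact_univ.elim_finite_subcover _
    (fun i : Γ × {N : Set X // IsClosed N ∧ N ⊆ V} => isOpen_interior.smul i.1) hcov
  refine ⟨⋃ i ∈ t, i.2.1, Set.iUnion₂_subset fun i _ => i.2.2.2,
    isClosed_biUnion_finset fun i _ => i.2.2.1, t.image Prod.fst,
    Set.eq_univ_of_forall fun x => ?_⟩
  obtain ⟨i, hi, y, hy, rfl⟩ := Set.mem_iUnion₂.1 (ht (Set.mem_univ x))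
  exact Set.smul_mem_smul (Finset.mem_image_of_mem _ hi)
    (Set.mem_iUnion₂.2 ⟨i, hi, interior_subset hy⟩)

namespace CoarseHeight

variable {Γ X : Type*} [Group Γ] [MulAction Γ X] (h : CoarseHeight Γ)

theorem exists_abs_sub_le_of_finset_smul_eq_univ {C : Set X} {S : Finset Γ}
    (hS : (S : Set Γ) • C = Set.univ) :
    ∃ R, ∀ (x : X) (m : ℤ), ∃ w, w⁻¹ • x ∈ C ∧ |h w - m| ≤ R := by
  obtain ⟨R, hR⟩ := (S.finite_toSet.image fun s => |h s|).bddAbove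
  refine ⟨R + h.bound, fun x m => ?_⟩
  obtain ⟨γ, rfl⟩ := h.surjective m
  obtain ⟨s, hs, y, hy, hsy⟩ := Set.mem_smul.1 (hS ▸ Set.mem_univ (γ⁻¹ • x))
  refine ⟨γ * s, by rwa [mul_inv_rev, mul_smul, ← hsy, inv_smul_smul], ?_⟩
  calc |h (γ * s) - h γ| = |(h (γ * s) - h γ - h.twist γ * h s) + h.twist γ * h s| := by ring_nf
    _ ≤ R + h.bound := by
      refine (abs_add_le _ _).trans ?_
      rw [Int.abs_units_mul]
      linarith [h.abs_map_mul_sub_le γ s, hR (Set.mem_image_of_mem _ hs)]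

variable {E : Set Γ} {ρ : ℤ} (hρ : ∀ e ∈ E, |h e| + h.bound ≤ ρ)
include hρ

theorem dynF_smul_finite {V : Set X}
    (hV : {γ | |h γ| ≤ 3 * ρ + h.bound}.PairwiseDisjoint (· • V)) :
    (dynF ({γ | |h γ| ≤ ρ} • V) E).Finite := by
  refine (h.finite_setOf_abs_le (2 * ρ + h.bound)).subset fun g hg => ?_
  have key := dynF_induction
    (fun x p => ∃ w, w⁻¹ • x ∈ V ∧ |h w| ≤ ρ ∧ |h (p * w)| ≤ ρ) ?one ?mul g hg
  case one =>
    intro x hx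
    obtain ⟨k, hk, y, hy, rfl⟩ := Set.mem_smul.1 hx
    exact ⟨k, by simpa, hk, by simpa⟩
  case mul =>
    rintro x p e he - hepx ⟨w, hwV, hw, hpw⟩
    obtain ⟨k, hk, y, hy, hky⟩ := Set.mem_smul.1 hepx
    have hepw : |h (e * p * w)| ≤ 2 * ρ := by
      rw [mul_assoc]; linarith [h.abs_map_mul_le e (p * w), hρ e he]
    have hwk : w = (e * p)⁻¹ * k := by
      refine eq_of_inv_smul_mem_of_pairwiseDisjoint hV ?_ hwV ?_ ?_
      · show |h 1| ≤ 3 * ρ + h.bound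
        linarith [h.abs_map_one_le, hρ e he, abs_nonneg (h e), abs_nonneg (h 1)]
      · rwa [mul_inv_rev, inv_inv, mul_smul, ← hky, inv_smul_smul]
      · show |h (w⁻¹ * ((e * p)⁻¹ * k))| ≤ 3 * ρ + h.bound
        have := h.abs_map_right_le (e * p * w) ((e * p * w)⁻¹ * k)
        rw [mul_inv_cancel_left] at this
        simp only [mul_inv_rev, mul_assoc] at this hepw ⊢
        linarith [show |h k| ≤ ρ from hk]
    exact ⟨w, hwV, hw, by rwa [hwk, mul_inv_cancel_left]⟩
  obtain ⟨x, -, w, -, hw, hgw⟩ := key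
  show |h g| ≤ 2 * ρ + h.bound
  linarith [h.abs_map_left_le g w]

theorem dynF_compl_smul_finite {C : Set X} {R : ℤ}
    (hC : ∀ (x : X) (m : ℤ), ∃ w, w⁻¹ • x ∈ C ∧ |h w - m| ≤ R) :
    (dynF ({γ | |h γ| ≤ ρ} • C)ᶜ E).Finite := by
  refine (h.finite_setOf_abs_le (3 * (2 * R + 1) + 3 * h.bound)).subset fun g hg => ?_
  have key := dynF_induction (fun x p => ∃ A B, A⁻¹ • x ∈ C ∧ B⁻¹ • x ∈ C ∧
    |h A| ≤ 2 * R + 1 ∧ |h B| ≤ 2 * R + 1 ∧ h (p * A) * h (p * B) < 0) ?one ?mul g hg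
  case one =>
    intro x _
    obtain ⟨A, hAC, hA⟩ := hC x (-(R + 1))
    obtain ⟨B, hBC, hB⟩ := hC x (R + 1)
    rw [abs_le] at hA hB
    refine ⟨A, B, hAC, hBC, abs_le.2 ⟨by linarith, by linarith⟩,
      abs_le.2 ⟨by linarith, by linarith⟩, ?_⟩
    simpa using mul_neg_of_neg_of_pos (by linarith : h A < 0) (by linarith : 0 < h B)
  case mul =>
    rintro x p e he hpx - ⟨A, B, hAC, hBC, hA, hB, hAB⟩
    have far (w : Γ) (hw : w⁻¹ • x ∈ C) : |h e| + h.bound < |h (p * w)| :=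
      (hρ e he).trans_lt <| not_le.1 fun hle => hpx <|
        Set.mem_smul.2 ⟨p * w, hle, w⁻¹ • x, hw, by rw [smul_smul, mul_inv_cancel_right]⟩
    refine ⟨A, B, hAC, hBC, hA, hB, ?_⟩
    simpa only [mul_assoc] using h.map_mul_mul_map_mul_neg (far A hAC) (far B hBC) hAB
  obtain ⟨x, -, A, B, -, -, hA, hB, hAB⟩ := key
  show |h g| ≤ 3 * (2 * R + 1) + 3 * h.bound
  linarith [h.abs_map_left_le g A, abs_le_abs_sub_of_mul_neg hAB,
    h.abs_map_mul_sub_map_mul_le g A B, abs_sub (h A) (h B)]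

end CoarseHeight

theorem CoarseHeight.exists_isOpen_cover_dynF_finite {Γ X : Type*} [Group Γ] [TopologicalSpace X]
    [CompactSpace X] [RegularSpace X] [MulAction Γ X] [ContinuousConstSMul Γ X]
    (h : CoarseHeight Γ) (hmarker : MarkerProperty Γ X) (E : Finset Γ) :
    ∃ U₀ U₁ : Set X, IsOpen U₀ ∧ IsOpen U₁ ∧ U₀ ∪ U₁ = Set.univ ∧
      (dynF U₀ (E : Set Γ)).Finite ∧ (dynF U₁ (E : Set Γ)).Finite := by
  obtain ⟨ρ, hρ⟩ := (E.finite_toSet.image fun e => |h e| + h.bound).bddAbove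
  replace hρ : ∀ e ∈ (E : Set Γ), |h e| + h.bound ≤ ρ := fun e he => hρ ⟨e, he, rfl⟩
  obtain ⟨V, hVo, hVdisj, hVcov⟩ := hmarker (h.finite_setOf_abs_le (3 * ρ + h.bound)).toFinset
  obtain ⟨C, hCV, hCc, S, hS⟩ := exists_isClosed_subset_finset_smul_eq_univ hVo hVcov
  obtain ⟨R, hR⟩ := h.exists_abs_sub_le_of_finset_smul_eq_univ hS
  refine ⟨{γ | |h γ| ≤ ρ} • V, ({γ | |h γ| ≤ ρ} • C)ᶜ, hVo.smul_left, ?_, ?_,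
    h.dynF_smul_finite hρ (by simpa using hVdisj), h.dynF_compl_smul_finite hρ hR⟩
  · rw [← Set.iUnion_smul_set]
    exact ((h.finite_setOf_abs_le ρ).isClosed_biUnion fun γ _ => hCc.smul γ).isOpen_compl
  · rw [Set.union_comm, ← Set.compl_subset_iff_union, compl_compl]
    exact Set.smul_subset_smul_left hCV

/-- For an infinite virtually cyclic group acting on a nonempty compact
Hausdorff space with the marker property, the dynamic asymptotic dimension equals 1. -/
theorem dad_eq_one_of_markerProperty
    (Γ X : Type*) [Group Γ] [Infinite Γ]
    [TopologicalSpace X] [CompactSpace X] [T2Space X] [Nonempty X]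
    [MulAction Γ X] [ContinuousConstSMul Γ X]
    (hvc : IsVirtuallyCyclic Γ) (hmarker : MarkerProperty Γ X) :
    (∀ E : Finset Γ, ∃ U₀ U₁ : Set X, IsOpen U₀ ∧ IsOpen U₁ ∧ U₀ ∪ U₁ = Set.univ ∧
        (dynF U₀ (E : Set Γ)).Finite ∧ (dynF U₁ (E : Set Γ)).Finite) ∧
    (∃ E : Finset Γ, (dynF (Set.univ : Set X) (E : Set Γ)).Infinite) := by
  obtain ⟨a, ha, _, _⟩ := hvc.exists_normal_zpowers
  obtain ⟨h⟩ := nonempty_coarseHeight ha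
  exact ⟨h.exists_isOpen_cover_dynF_finite hmarker,
    ⟨{a}, by simpa using dynF_univ_singleton_infinite (X := X) ha⟩⟩
end

section
/- Let Γ be an infinite virtually cyclic group acting by homeomorphisms on a compact Hausdorff space X, and suppose the action has the marker property. Then for every finite subset E ⊆ Γ there exist open sets U_0, U_1 ⊆ X with U_0 ∪ U_1 = X such that the sets F(U_0, E) and F(U_1, E) are both finite. -/
open Pointwise

/-!
An infinite virtually cyclic group contains an element `t` of infinite order with `⟨t⟩` normal
of finite index. Writing `g = r * t ^ m` with `r` in a fixed transversal gives a height
`φ g = m`: it is proper, left multiplication by a finite set moves it a bounded amount, and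
right multiplication changes it only up to a sign and a bounded shift.

Given `E`, let `D` be a large window `|φ| ≤ T`, `U` a marker for `D⁻¹ * E * D`, and `C ⊆ U`
a closed set with finitely many translates covering `X`. Along an `E`-orbit segment in
`U₀ = D • U`, disjointness of the marker translates forces the `D`-label to stay the same,
so `F(U₀, E) ⊆ D * D⁻¹`. For `U₁ = (D • C)ᶜ`, the translates of `C` containing the starting
point give heights on both sides of `φ 1` within a bounded distance, which the heights along
an orbit segment in `U₁` can neither reach nor jump over.
-/

open Subgroup

theorem IsVirtuallyCyclic.exists_zpowers_normal_finiteIndex {Γ : Type*} [Group Γ] [Infinite Γ]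
    (hvc : IsVirtuallyCyclic Γ) :
    ∃ t : Γ, ¬IsOfFinOrder t ∧ (zpowers t).Normal ∧ (zpowers t).FiniteIndex := by
  obtain ⟨H, _, _⟩ := hvc
  have : IsCyclic H.normalCore := isCyclic_of_le H.normalCore_le
  obtain ⟨t, ht⟩ := IsCyclic.exists_generator (α := H.normalCore)
  have hzp : zpowers (t : Γ) = H.normalCore :=
    le_antisymm (zpowers_le.mpr t.2) fun x hx => by
      obtain ⟨m, hm⟩ := ht ⟨x, hx⟩
      exact ⟨m, congrArg Subtype.val hm⟩
  refine ⟨t, ?_, by rw [hzp]; infer_instance, by rw [hzp]; infer_instance⟩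
  rw [← infinite_zpowers, hzp, ← Set.infinite_coe_iff, ← not_finite_iff_infinite]
  intro hfin
  have : Finite Γ := (finite_iff_finite_and_finiteIndex _).mpr ⟨hfin, inferInstance⟩
  exact not_finite Γ

structure IsCoarseHeight {Γ : Type*} [Group Γ] (φ : Γ → ℤ) : Prop where
  finite_abs_le (B : ℤ) : {g | |φ g| ≤ B}.Finite
  surjective : Function.Surjective φ
  exists_abs_mul_left_sub_le (E : Set Γ) (hE : E.Finite) :
    ∃ N : ℤ, ∀ e ∈ E, ∀ g, |φ (e * g) - φ g| ≤ N
  /-- Right translations may reverse the orientation (as in the infinite dihedral group), so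
  only `|φ|` is controlled, up to a shift `c a`. -/
  exists_abs_abs_mul_right_sub_le :
    ∃ (C : ℤ) (c : Γ → ℤ), ∀ a g, |(|φ (g * a)| - |φ g - c a|)| ≤ C

section Coordinates

variable {Γ : Type*} [Group Γ] (t : Γ)

noncomputable def zpowersRep (g : Γ) : Γ := (QuotientGroup.mk g : Γ ⧸ zpowers t).out

theorem zpowersRep_inv_mul_mem (g : Γ) : (zpowersRep t g)⁻¹ * g ∈ zpowers t :=
  QuotientGroup.eq.mp (QuotientGroup.out_eq' _)

noncomputable def zpowersCoord (g : Γ) : ℤ :=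
  (mem_zpowers_iff.mp (zpowersRep_inv_mul_mem t g)).choose

theorem zpowersRep_mul_zpow_zpowersCoord (g : Γ) :
    zpowersRep t g * t ^ zpowersCoord t g = g := by
  rw [zpowersCoord, (mem_zpowers_iff.mp (zpowersRep_inv_mul_mem t g)).choose_spec,
    mul_inv_cancel_left]

theorem zpowersRep_mul_zpow (g : Γ) (m : ℤ) : zpowersRep t (g * t ^ m) = zpowersRep t g := by
  unfold zpowersRep
  congr 1
  rw [QuotientGroup.eq, mul_inv_rev, mul_assoc, inv_mul_cancel, mul_one]
  exact inv_mem (zpow_mem (mem_zpowers t) m)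

theorem finite_range_zpowersRep [(zpowers t).FiniteIndex] : (Set.range (zpowersRep t)).Finite :=
  (Set.finite_range fun q : Γ ⧸ zpowers t => q.out).subset
    (Set.range_comp_subset_range QuotientGroup.mk _)

variable {t} (ht : ¬IsOfFinOrder t)
include ht

theorem zpowersCoord_mul_zpow (g : Γ) (m : ℤ) :
    zpowersCoord t (g * t ^ m) = zpowersCoord t g + m := by
  apply injective_zpow_iff_not_isOfFinOrder.mpr ht
  apply mul_left_cancel (a := zpowersRep t (g * t ^ m))
  dsimp only
  rw [zpowersRep_mul_zpow_zpowersCoord, zpowersRep_mul_zpow, zpow_add, ← mul_assoc,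
    zpowersRep_mul_zpow_zpowersCoord]

theorem zpowersCoord_mul (h g : Γ) :
    zpowersCoord t (h * g) = zpowersCoord t (h * zpowersRep t g) + zpowersCoord t g := by
  conv_lhs => rw [← zpowersRep_mul_zpow_zpowersCoord t g, ← mul_assoc]
  exact zpowersCoord_mul_zpow ht _ _

theorem exists_inv_mul_zpow_mul_eq (hn : (zpowers t).Normal) (a : Γ) :
    ∃ ε : ℤ, |ε| = 1 ∧ ∀ m : ℤ, a⁻¹ * t ^ m * a = t ^ (ε * m) := by
  have conj_zpow_eq (b : Γ) : ∃ k : ℤ, ∀ m : ℤ, b * t ^ m * b⁻¹ = t ^ (k * m) := by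
    obtain ⟨k, hk⟩ := mem_zpowers_iff.mp (hn.conj_mem t (mem_zpowers t) b)
    exact ⟨k, fun m => by rw [zpow_mul, hk, conj_zpow]⟩
  obtain ⟨k, hk⟩ := conj_zpow_eq a⁻¹
  obtain ⟨l, hl⟩ := conj_zpow_eq a
  simp only [inv_inv] at hk
  have hlk : l * k = 1 := injective_zpow_iff_not_isOfFinOrder.mpr ht <|
    show t ^ (l * k) = t ^ (1 : ℤ) by rw [← hl, ← mul_one k, ← hk, zpow_one]; group
  exact ⟨k, Int.isUnit_iff_abs_eq.mp (IsUnit.of_mul_eq_one_right _ hlk), hk⟩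

theorem zpowersCoord_mul_eq_of_conj {a : Γ} {ε : ℤ}
    (hε : ∀ m : ℤ, a⁻¹ * t ^ m * a = t ^ (ε * m)) (g : Γ) :
    zpowersCoord t (g * a) = zpowersCoord t (zpowersRep t g * a) + ε * zpowersCoord t g := by
  rw [← zpowersCoord_mul_zpow ht, ← hε]
  conv_lhs => rw [← zpowersRep_mul_zpow_zpowersCoord t g]
  group

theorem exists_abs_zpowersCoord_mul_sub_le [(zpowers t).FiniteIndex] {E : Set Γ}
    (hE : E.Finite) :
    ∃ N : ℤ, ∀ e ∈ E, ∀ g, |zpowersCoord t (e * g) - zpowersCoord t g| ≤ N := by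
  obtain ⟨N, hN⟩ := ((hE.image2 (· * ·) (finite_range_zpowersRep t)).image
    fun g => |zpowersCoord t g|).bddAbove
  refine ⟨N, fun e he g => ?_⟩
  rw [zpowersCoord_mul ht, add_sub_cancel_right]
  exact hN ⟨_, ⟨e, he, _, ⟨g, rfl⟩, rfl⟩, rfl⟩

theorem isCoarseHeight_zpowersCoord (hn : (zpowers t).Normal) [(zpowers t).FiniteIndex] :
    IsCoarseHeight (zpowersCoord t) where
  finite_abs_le B := by
    refine Set.Finite.of_finite_image (f := fun g => ((g : Γ ⧸ zpowers t), zpowersCoord t g))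
      ((Set.finite_univ.prod (Set.finite_Icc (-B) B)).subset ?_) ?_
    · rintro _ ⟨g, hg, rfl⟩
      exact ⟨Set.mem_univ _, abs_le.mp hg⟩
    · intro g _ g' _ h
      simp only [Prod.mk.injEq] at h
      rw [← zpowersRep_mul_zpow_zpowersCoord t g, ← zpowersRep_mul_zpow_zpowersCoord t g',
        zpowersRep, zpowersRep, h.1, h.2]
  surjective m := ⟨t ^ (m - zpowersCoord t 1), by
    rw [← one_mul (t ^ _), zpowersCoord_mul_zpow ht]
    ring⟩
  exists_abs_mul_left_sub_le _ := exists_abs_zpowersCoord_mul_sub_le ht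
  exists_abs_abs_mul_right_sub_le := by
    obtain ⟨N, hN⟩ := exists_abs_zpowersCoord_mul_sub_le ht (finite_range_zpowersRep t)
    choose ε hε_abs hε using exists_inv_mul_zpow_mul_eq ht hn
    refine ⟨N, fun a => -(ε a * zpowersCoord t a), fun a g => ?_⟩
    have hεε : ε a * ε a = 1 := by rw [← abs_mul_abs_self, hε_abs a, one_mul]
    calc |(|zpowersCoord t (g * a)| - |zpowersCoord t g - -(ε a * zpowersCoord t a)|)|
        ≤ |ε a * zpowersCoord t (g * a) - (zpowersCoord t g + ε a * zpowersCoord t a)| := by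
          rw [← one_mul |zpowersCoord t (g * a)|, ← hε_abs a, ← abs_mul]
          rw [sub_neg_eq_add]
          exact abs_abs_sub_abs_le _ _
      _ = |ε a * (zpowersCoord t (zpowersRep t g * a) - zpowersCoord t a)| := by
          rw [zpowersCoord_mul_eq_of_conj ht (hε a)]
          congr 1
          linear_combination zpowersCoord t g * hεε
      _ ≤ N := by
          rw [abs_mul, hε_abs, one_mul]
          exact hN _ ⟨g, rfl⟩ a

end Coordinates

theorem IsVirtuallyCyclic.exists_isCoarseHeight {Γ : Type*} [Group Γ] [Infinite Γ]
    (hvc : IsVirtuallyCyclic Γ) : ∃ φ : Γ → ℤ, IsCoarseHeight φ := by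
  obtain ⟨t, ht, hn, hfi⟩ := hvc.exists_zpowers_normal_finiteIndex
  exact ⟨_, isCoarseHeight_zpowersCoord ht hn⟩

theorem Int.mem_Ioo_of_abs_sub_le {f : ℕ → ℤ} {n : ℕ} {N lo hi : ℤ}
    (hstep : ∀ j < n, |f (j + 1) - f j| ≤ N) (hlo : ∀ j ≤ n, N < |f j - lo|)
    (hhi : ∀ j ≤ n, N < |f j - hi|) (h₀ : f 0 ∈ Set.Ioo lo hi) : f n ∈ Set.Ioo lo hi := by
  induction n with
  | zero => exact h₀
  | succ n ih =>
    obtain ⟨hl, hh⟩ := ih (fun j hj => hstep j (by omega)) (fun j hj => hlo j (by omega))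
      (fun j hj => hhi j (by omega))
    have := abs_le.mp (hstep n n.lt_succ_self)
    have := lt_abs.mp (hlo (n + 1) le_rfl)
    have := lt_abs.mp (hhi (n + 1) le_rfl)
    constructor <;> omega

section Dynamics

variable {Γ X : Type*} [Group Γ] [MulAction Γ X]

theorem exists_chain_of_mem_dynF {U : Set X} {E : Set Γ} {g : Γ} (hg : g ∈ dynF U E) :
    ∃ (n : ℕ) (w : ℕ → Γ) (x : X), w 0 = 1 ∧ w n = g ∧
      (∀ j < n, w (j + 1) * (w j)⁻¹ ∈ E) ∧ ∀ j ≤ n, w j • x ∈ U := by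
  obtain ⟨L, -, hLE, rfl, x, hx, hchain⟩ := hg
  refine ⟨L.length, fun j => (L.take j).reverse.prod, x, by simp, by simp, fun j hj => ?_,
    fun j hj => ?_⟩
  · have hprod : (L.take (j + 1)).reverse.prod = L[j] * (L.take j).reverse.prod := by
      rw [List.take_succ_eq_append_getElem hj, List.reverse_append, List.prod_append,
        List.reverse_singleton, List.prod_singleton]
    simpa only [hprod, mul_inv_cancel_right] using hLE _ (List.getElem_mem hj)
  · rcases j.eq_zero_or_pos with rfl | hj₀
    · simpa using hx
    · exact hchain j hj₀ hj

theorem eq_of_smul_mem_of_pairwiseDisjoint {F : Set Γ} {U : Set X}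
    (hU : (insert 1 F).PairwiseDisjoint (· • U)) {u v : Γ} {x : X} (huv : u * v⁻¹ ∈ F)
    (hu : u • x ∈ U) (hv : v • x ∈ U) : u = v := by
  by_contra hne
  have hdisj : Disjoint ((1 : Γ) • U) ((u * v⁻¹) • U) :=
    hU (Set.mem_insert 1 F) (Set.mem_insert_of_mem 1 huv) fun h =>
      hne (mul_inv_eq_one.mp h.symm)
  have hu' : u • x = (u * v⁻¹) • v • x := by rw [smul_smul, inv_mul_cancel_right]
  exact Set.disjoint_left.mp hdisj (by rwa [one_smul]) (hu' ▸ Set.smul_mem_smul_set hv)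

theorem dynF_biUnion_smul_subset {D E : Set Γ} {U : Set X}
    (hU : (insert 1 (D⁻¹ * E * D)).PairwiseDisjoint (· • U)) :
    dynF (⋃ d ∈ D, d • U) E ⊆ D * D⁻¹ := by
  intro g hg
  obtain ⟨n, w, x, hw₀, rfl, hstep, hw⟩ := exists_chain_of_mem_dynF hg
  have mem_smul_iff {j : ℕ} {d : Γ} : w j • x ∈ d • U ↔ (d⁻¹ * w j) • x ∈ U := by
    rw [Set.mem_smul_set_iff_inv_smul_mem, smul_smul]
  obtain ⟨d₀, hd₀, hx₀⟩ := Set.mem_iUnion₂.mp (hw 0 n.zero_le)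
  rw [mem_smul_iff, hw₀, mul_one] at hx₀
  have key : ∀ j ≤ n, ∃ d ∈ D, d⁻¹ * w j = d₀⁻¹ := by
    intro j
    induction j with
    | zero => exact fun _ => ⟨d₀, hd₀, by rw [hw₀, mul_one]⟩
    | succ j ih =>
      intro hj
      obtain ⟨d, hd, hdj⟩ := ih (by omega)
      obtain ⟨d', hd', hx'⟩ := Set.mem_iUnion₂.mp (hw (j + 1) hj)
      refine ⟨d', hd', eq_of_smul_mem_of_pairwiseDisjoint hU ?_ (mem_smul_iff.mp hx') hx₀⟩
      rw [← hdj]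
      convert Set.mul_mem_mul (Set.mul_mem_mul (Set.inv_mem_inv.mpr hd') (hstep j hj)) hd using 1
      group
  obtain ⟨d, hd, hdn⟩ := key n le_rfl
  refine ⟨d, hd, d₀⁻¹, Set.inv_mem_inv.mpr hd₀, ?_⟩
  simp only [← hdn, mul_inv_cancel_left]

theorem IsCoarseHeight.exists_finite_dynF_compl {φ : Γ → ℤ} (hφ : IsCoarseHeight φ)
    {E : Set Γ} (hE : E.Finite) :
    ∃ T : ℤ, ∀ (C : Set X) (S : Set Γ), S.Finite → ⋃ s ∈ S, s • C = Set.univ →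
      (dynF (⋃ d ∈ {g | |φ g| ≤ T}, d • C)ᶜ E).Finite := by
  obtain ⟨N, hN⟩ := hφ.exists_abs_mul_left_sub_le E hE
  obtain ⟨K, c, hc⟩ := hφ.exists_abs_abs_mul_right_sub_le
  refine ⟨N + K, fun C S hS hSC => ?_⟩
  obtain ⟨M, hM⟩ := (hS.image fun s => |φ s|).bddAbove
  refine (hφ.finite_abs_le (|φ 1| + 2 * (M + K) + 1)).subset fun g hg => ?_
  obtain ⟨n, w, x, hw₀, rfl, hstep, hw⟩ := exists_chain_of_mem_dynF hg
  have exists_near (z : ℤ) : ∃ a, x ∈ a • C ∧ |z - c a| ≤ M + K := by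
    obtain ⟨g, rfl⟩ := hφ.surjective z
    obtain ⟨s, hs, hgx⟩ := Set.mem_iUnion₂.mp (hSC.ge (Set.mem_univ (g • x)))
    refine ⟨g⁻¹ * s, by rwa [mul_smul, Set.mem_smul_set_iff_inv_smul_mem, inv_inv], ?_⟩
    have := hc (g⁻¹ * s) g
    rw [mul_inv_cancel_left] at this
    linarith [abs_le.mp this, hM ⟨s, hs, rfl⟩]
  have far (a : Γ) (ha : x ∈ a • C) (j : ℕ) (hj : j ≤ n) : N < |φ (w j) - c a| := by
    have : N + K < |φ (w j * a)| := by
      by_contra! hle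
      exact hw j hj (Set.mem_biUnion hle (by rw [mul_smul]; exact Set.smul_mem_smul_set ha))
    linarith [abs_le.mp (hc a (w j))]
  obtain ⟨aₗ, haₗ, hₗ⟩ := exists_near (φ 1 - (M + K) - 1)
  obtain ⟨aₕ, haₕ, hₕ⟩ := exists_near (φ 1 + (M + K) + 1)
  have hstep' (j : ℕ) (hj : j < n) : |φ (w (j + 1)) - φ (w j)| ≤ N := by
    simpa only [inv_mul_cancel_right] using hN _ (hstep j hj) (w j)
  obtain ⟨hlo, hhi⟩ := Int.mem_Ioo_of_abs_sub_le (f := fun j => φ (w j)) hstep' (far aₗ haₗ)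
    (far aₕ haₕ) <| by
      rw [Set.mem_Ioo, hw₀]
      constructor <;> linarith [abs_le.mp hₗ, abs_le.mp hₕ]
  show |φ (w n)| ≤ _
  rw [abs_le]
  constructor <;> linarith [abs_le.mp hₗ, abs_le.mp hₕ, neg_abs_le (φ 1), le_abs_self (φ 1)]

end Dynamics

theorem exists_isClosed_subset_biUnion_smul_eq_univ {Γ X : Type*} [Group Γ]
    [TopologicalSpace X] [CompactSpace X] [NormalSpace X] [MulAction Γ X]
    [ContinuousConstSMul Γ X] {U : Set X} (hU : IsOpen U) (hcov : ⋃ g : Γ, g • U = Set.univ) :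
    ∃ C : Set X, IsClosed C ∧ C ⊆ U ∧ ∃ S : Set Γ, S.Finite ∧ ⋃ s ∈ S, s • C = Set.univ := by
  obtain ⟨S, hS⟩ := isCompact_univ.elim_finite_subcover (fun g : Γ => g • U)
    (fun g => hU.smul g) hcov.ge
  obtain ⟨v, hv, -, hvU⟩ := exists_subset_iUnion_closure_subset isClosed_univ
    (u := fun i : S => (i : Γ) • U) (fun i => hU.smul _) (fun _ _ => Set.toFinite _)
    (by simpa only [Set.iUnion_subtype] using hS)
  refine ⟨⋃ i : S, (i : Γ)⁻¹ • closure (v i), isClosed_iUnion_of_finite fun i =>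
    isClosed_closure.smul _, Set.iUnion_subset fun i => ?_, S, S.finite_toSet, ?_⟩
  · rw [Set.smul_set_subset_iff_subset_inv_smul_set, inv_inv]
    exact hvU i
  · refine Set.eq_univ_of_forall fun y => ?_
    obtain ⟨i, hy⟩ := Set.mem_iUnion.mp (hv (Set.mem_univ y))
    refine Set.mem_biUnion i.2 (Set.smul_set_mono (Set.subset_iUnion _ i) ?_)
    rw [smul_inv_smul]
    exact subset_closure hy

/-- For an infinite virtually cyclic group acting on a compact Hausdorff
space with the marker property, every finite `E` admits a two-set open cover with
finite `F(Uᵢ, E)`. -/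
theorem exists_two_set_cover_of_markerProperty
    (Γ X : Type*) [Group Γ] [Infinite Γ]
    [TopologicalSpace X] [CompactSpace X] [T2Space X]
    [MulAction Γ X] [ContinuousConstSMul Γ X]
    (hvc : IsVirtuallyCyclic Γ) (hmarker : MarkerProperty Γ X) :
    ∀ E : Finset Γ, ∃ U₀ U₁ : Set X, IsOpen U₀ ∧ IsOpen U₁ ∧ U₀ ∪ U₁ = Set.univ ∧
      (dynF U₀ (E : Set Γ)).Finite ∧ (dynF U₁ (E : Set Γ)).Finite := by
  intro E
  obtain ⟨φ, hφ⟩ := hvc.exists_isCoarseHeight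
  obtain ⟨T, hT⟩ := hφ.exists_finite_dynF_compl (X := X) E.finite_toSet
  set D := {g | |φ g| ≤ T}
  have hD : D.Finite := hφ.finite_abs_le T
  have hF : (insert 1 (D⁻¹ * E * D)).Finite := ((hD.inv.mul E.finite_toSet).mul hD).insert 1
  obtain ⟨U, hU, hUdisj, hUcov⟩ := hmarker hF.toFinset
  rw [hF.coe_toFinset] at hUdisj
  obtain ⟨C, hC, hCU, S, hS, hSC⟩ := exists_isClosed_subset_biUnion_smul_eq_univ hU hUcov
  refine ⟨⋃ d ∈ D, d • U, (⋃ d ∈ D, d • C)ᶜ, isOpen_biUnion fun d _ => hU.smul d,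
    (hD.isClosed_biUnion fun d _ => hC.smul d).isOpen_compl, ?_,
    (hD.mul hD.inv).subset (dynF_biUnion_smul_subset hUdisj), hT C S hS hSC⟩
  exact Set.eq_univ_of_univ_subset <| (Set.union_compl_self _).ge.trans <|
    Set.union_subset_union_left _ <| Set.biUnion_mono subset_rfl fun _ _ => Set.smul_set_mono hCU
end

section
/- Let the infinite dihedral group D_∞ = ⟨s, t : s² = t² = e⟩ act freely and minimally by homeomorphisms on a nonempty compact Hausdorff space X. Then the dynamic asymptotic dimension of the action equals 1. -/
open Pointwise

open Topology

/-!
`|coord (a * b⁻¹)|` is a proper right-invariant distance on `D∞`, so along a chain `gⱼ ⋯ g₁`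
with all `gᵢ ∈ E` the coordinate moves by at most some `N` per step; let `B` be the `N`-ball.
Freeness gives a nonempty open `V` disjoint from its translates by `B⁻¹ E B \ {1}`; let `K ⊆ V`
be a closed neighbourhood of a point of `V`, and cover `X` by `B • V` and `(B • K)ᶜ`.
A walk inside `B • V` is pinned to a single translate of `V`, so `F(B • V, E) ⊆ B B⁻¹`.
By minimality and compactness every orbit visits `K` at coordinates that are `M`-dense in `ℤ`;
a walk inside `(B • K)ᶜ` stays more than `N` away from these visits, so it cannot jump over the
nearest one on either side of its start, and `F((B • K)ᶜ, E)` lies in the `2M`-ball.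
Dimension `0` fails because `F(X, {r 1})` contains every positive power of `r 1`.
-/

section Dynamics

variable {Γ X : Type*} [Group Γ] [MulAction Γ X]

theorem exists_walk_of_mem_dynF {U : Set X} {E : Set Γ} {g : Γ} (hg : g ∈ dynF U E) :
    ∃ (n : ℕ) (q : ℕ → Γ) (x : X), q 0 = 1 ∧ q n = g ∧
      (∀ j < n, q (j + 1) * (q j)⁻¹ ∈ E) ∧ ∀ j ≤ n, q j • x ∈ U := by
  obtain ⟨L, -, hLE, rfl, x, hx, hpath⟩ := hg
  refine ⟨L.length, fun j => (L.take j).reverse.prod, x, by simp, by simp, fun j hj => ?_,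
    fun j hj => ?_⟩
  · dsimp only
    rw [List.take_add_one, List.getElem?_eq_getElem hj, Option.toList_some, List.reverse_append,
      List.reverse_singleton, List.singleton_append, List.prod_cons, mul_inv_cancel_right]
    exact hLE _ (List.getElem_mem hj)
  · rcases j.eq_zero_or_pos with rfl | hj₀
    · simpa using hx
    · exact hpath j hj₀ hj

theorem dynF_smul_subset_mul_inv {B E : Set Γ} {V : Set X}
    (hV : ∀ g ∈ B⁻¹ * E * B, g ≠ 1 → Disjoint V (g • V)) : dynF (B • V) E ⊆ B * B⁻¹ := by
  intro g hg
  obtain ⟨n, q, x, hq0, rfl, hstep, hU⟩ := exists_walk_of_mem_dynF hg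
  have hcover : ∀ j ≤ n, ∃ c ∈ B, (c⁻¹ * q j) • x ∈ V := by
    intro j hj
    obtain ⟨c, hc, v, hv, hcv⟩ := hU j hj
    exact ⟨c, hc, by rwa [mul_smul, ← hcv, inv_smul_smul]⟩
  choose! c hcB hcV using hcover
  have hconst : ∀ j ≤ n, (c j)⁻¹ * q j = (c 0)⁻¹ := by
    intro j hj
    induction j with
    | zero => rw [hq0, mul_one]
    | succ j ih =>
      rw [← ih (by omega)]
      by_contra hne
      have hmem : (c (j + 1))⁻¹ * q (j + 1) * ((c j)⁻¹ * q j)⁻¹ ∈ B⁻¹ * E * B := by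
        convert Set.mul_mem_mul (Set.mul_mem_mul (Set.inv_mem_inv.2 (hcB (j + 1) hj))
          (hstep j hj)) (hcB j (by omega)) using 1
        group
      refine Set.disjoint_left.1 (hV _ hmem (mul_inv_eq_one.not.2 hne)) (hcV (j + 1) hj) ?_
      have htrans := Set.smul_mem_smul_set
        (a := (c (j + 1))⁻¹ * q (j + 1) * ((c j)⁻¹ * q j)⁻¹) (hcV j (by omega))
      rwa [smul_smul, inv_mul_cancel_right] at htrans
  have hqn : q n = c n * (c 0)⁻¹ := by
    rw [← hconst n le_rfl, mul_inv_cancel_left]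
  exact hqn ▸ Set.mul_mem_mul (hcB n le_rfl) (Set.inv_mem_inv.2 (hcB 0 (Nat.zero_le n)))

theorem not_dadLE_zero_of_not_isOfFinOrder [TopologicalSpace X] [Nonempty X] {g : Γ}
    (hg : ¬ IsOfFinOrder g) : ¬ DadLE Γ X 0 := by
  intro h
  obtain ⟨U, -, hcov, hfin⟩ := h {g}
  have hU : U 0 = Set.univ := Set.eq_univ_of_forall fun y => by
    obtain ⟨i, hi⟩ := Set.iUnion_eq_univ_iff.1 hcov y
    rwa [Fin.fin_one_eq_zero i] at hi
  obtain ⟨x⟩ := ‹Nonempty X›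
  have hpow : Set.range (fun n : ℕ => g ^ (n + 1)) ⊆ dynF (U 0) ({g} : Finset Γ) := by
    rintro _ ⟨n, rfl⟩
    refine ⟨List.replicate (n + 1) g, by simp, by simp +contextual,
      by simp, x, by simp [hU], fun _ _ _ => by simp [hU]⟩
  exact (Set.infinite_range_of_injective ((injective_pow_iff_not_isOfFinOrder.2 hg).comp
    (add_left_injective 1))).mono hpow (hfin 0)

theorem dad_eq_one [TopologicalSpace X] (h1 : DadLE Γ X 1) (h0 : ¬ DadLE Γ X 0) :
    dad Γ X = 1 := by
  refine le_antisymm (sInf_le ⟨1, h1, Nat.cast_one⟩) (le_sInf ?_)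
  rintro _ ⟨d, hd, rfl⟩
  have hd0 : d ≠ 0 := by rintro rfl; exact h0 hd
  change (1 : ℕ∞) ≤ d
  exact_mod_cast Nat.one_le_iff_ne_zero.2 hd0

variable [TopologicalSpace X] [ContinuousConstSMul Γ X]

theorem exists_mem_nhds_disjoint_smul [T2Space X] {g : Γ} {x : X} (hgx : g • x ≠ x) :
    ∃ V ∈ 𝓝 x, Disjoint V (g • V) := by
  obtain ⟨A, A', hA, hA', hAA'⟩ := t2_separation_nhds hgx.symm
  refine ⟨A ∩ g⁻¹ • A', Filter.inter_mem hA ?_, hAA'.mono Set.inter_subset_left ?_⟩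
  · rwa [← smul_mem_nhds_smul_iff g, smul_inv_smul]
  · exact (Set.smul_set_mono Set.inter_subset_right).trans (smul_inv_smul g A').subset

theorem exists_isOpen_nonempty_disjoint_smul [T2Space X] [Nonempty X]
    (hfree : ∀ (g : Γ) (x : X), g • x = x → g = 1) {S : Set Γ} (hS : S.Finite) :
    ∃ V : Set X, IsOpen V ∧ V.Nonempty ∧ ∀ g ∈ S, g ≠ 1 → Disjoint V (g • V) := by
  obtain ⟨x⟩ := ‹Nonempty X›
  have hsep : ∀ g ∈ {g ∈ S | g ≠ 1}, ∃ V ∈ 𝓝 x, Disjoint V (g • V) :=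
    fun g hg => exists_mem_nhds_disjoint_smul fun h => hg.2 (hfree g x h)
  choose! V hVx hV using hsep
  have hmem : (⋂ g ∈ {g ∈ S | g ≠ 1}, V g) ∈ 𝓝 x :=
    (Filter.biInter_mem (hS.subset (Set.sep_subset _ _))).2 hVx
  refine ⟨interior (⋂ g ∈ {g ∈ S | g ≠ 1}, V g), isOpen_interior,
    ⟨x, mem_interior_iff_mem_nhds.2 hmem⟩, fun g hgS hg => ?_⟩
  have hsub : interior (⋂ g ∈ {g ∈ S | g ≠ 1}, V g) ⊆ V g :=
    interior_subset.trans (Set.biInter_subset_of_mem ⟨hgS, hg⟩)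
  exact (hV g ⟨hgS, hg⟩).mono hsub (Set.smul_set_mono hsub)

theorem exists_finset_forall_smul_mem [CompactSpace X] [MulAction.IsMinimal Γ X] {W : Set X}
    (hWo : IsOpen W) (hWne : W.Nonempty) : ∃ I : Finset Γ, ∀ z : X, ∃ g ∈ I, g • z ∈ W := by
  classical
  obtain ⟨I, hI⟩ := isCompact_univ.exists_finite_cover_smul Γ hWo hWne
  refine ⟨I⁻¹, fun z => ?_⟩
  obtain ⟨g, hg, hz⟩ := Set.mem_iUnion₂.1 (hI (Set.mem_univ z))
  exact ⟨g⁻¹, Finset.inv_mem_inv hg, Set.mem_smul_set_iff_inv_smul_mem.1 hz⟩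

end Dynamics

theorem walk_lt_of_forall_lt_abs_sub (p : ℕ → ℤ) {n : ℕ} {a N : ℤ}
    (hstep : ∀ j < n, |p (j + 1) - p j| ≤ N) (hfar : ∀ j ≤ n, N < |p j - a|) (h0 : p 0 < a) :
    p n < a := by
  induction n with
  | zero => exact h0
  | succ n ih =>
    have hn := ih (fun j hj => hstep j (by omega)) (fun j hj => hfar j (by omega))
    have h₁ := hstep n (by omega)
    have h₂ := hfar (n + 1) le_rfl
    rw [abs_le] at h₁
    rw [lt_abs] at h₂
    omega

namespace DihedralGroup

/-- Writing `D∞ = ℤ ⋊ ℤ/2`, the `ℤ`-component. -/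
def coord : DihedralGroup 0 → ℤ
  | r i => i
  | sr i => i

theorem abs_coord_mul_inv (a b : DihedralGroup 0) : |coord (a * b⁻¹)| = |coord a - coord b| := by
  rcases a with i | i <;> rcases b with j | j
  · exact congrArg abs (sub_eq_add_neg (G := ℤ) i j).symm
  · exact abs_sub_comm (α := ℤ) j i
  · exact congrArg abs (sub_eq_add_neg (G := ℤ) i j).symm
  · exact abs_sub_comm (α := ℤ) j i

theorem finite_setOf_abs_coord_le (R : ℤ) : {g : DihedralGroup 0 | |coord g| ≤ R}.Finite := by
  refine (((Set.finite_Icc (-R) R).image r).union ((Set.finite_Icc (-R) R).image sr)).subset ?_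
  rintro (i | i) h
  · exact Or.inl ⟨i, abs_le.1 h, rfl⟩
  · exact Or.inr ⟨i, abs_le.1 h, rfl⟩

theorem exists_forall_abs_coord_le {s : Set (DihedralGroup 0)} (hs : s.Finite) :
    ∃ R, ∀ g ∈ s, |coord g| ≤ R :=
  (hs.image _).bddAbove.imp fun _ hR g hg => hR ⟨g, hg, rfl⟩

variable {X : Type*} [MulAction (DihedralGroup 0) X]

theorem dynF_compl_smul_subset {K : Set X} {E : Set (DihedralGroup 0)} {M N : ℤ}
    (hK : ∀ z : X, ∃ h, |coord h| ≤ M ∧ h • z ∈ K) (hE : ∀ e ∈ E, |coord e| ≤ N) :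
    dynF ({c | |coord c| ≤ N} • K)ᶜ E ⊆ {g | |coord g| ≤ 2 * M} := by
  intro g hg
  obtain ⟨n, q, x, hq0, rfl, hstep, hU⟩ := exists_walk_of_mem_dynF hg
  have hfar : ∀ h, h • x ∈ K → ∀ j ≤ n, N < |coord (q j) - coord h| := by
    intro h hh j hj
    by_contra! hle
    refine hU j hj ⟨q j * h⁻¹, (abs_coord_mul_inv _ _).trans_le hle, h • x, hh, ?_⟩
    change (q j * h⁻¹) • h • x = q j • x
    rw [smul_smul, inv_mul_cancel_right]
  have hsteps : ∀ j < n, |coord (q (j + 1)) - coord (q j)| ≤ N := fun j hj =>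
    abs_coord_mul_inv _ _ ▸ hE _ (hstep j hj)
  have hvisit : ∀ t : ℤ, ∃ h, h • x ∈ K ∧ |coord h - t| ≤ M := by
    intro t
    obtain ⟨h, hhM, hh⟩ := hK (r (n := 0) t • x)
    refine ⟨h * r t, by rwa [mul_smul], ?_⟩
    have hdist := abs_coord_mul_inv (h * r t) (r t)
    rw [mul_inv_cancel_right] at hdist
    exact hdist.symm.le.trans hhM
  obtain ⟨a, ha, hat⟩ := hvisit (M + 1)
  obtain ⟨b, hb, hbt⟩ := hvisit (-(M + 1))
  have hlt := walk_lt_of_forall_lt_abs_sub (coord ∘ q) hsteps (hfar a ha)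
  have hgt := walk_lt_of_forall_lt_abs_sub (fun j => -coord (q j)) (a := -coord b) (N := N)
    (fun j hj => by rw [neg_sub_neg, abs_sub_comm]; exact hsteps j hj)
    (fun j hj => by rw [neg_sub_neg, abs_sub_comm]; exact hfar b hb j hj)
  simp only [Function.comp, hq0] at hlt hgt
  rw [abs_le] at hat hbt
  change |coord (q n)| ≤ 2 * M
  rw [abs_le]
  have hcoord₁ : coord 1 = 0 := rfl
  omega

variable [TopologicalSpace X] [ContinuousConstSMul (DihedralGroup 0) X]

theorem dadLE_one_of_free [CompactSpace X] [T2Space X] [Nonempty X]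
    [MulAction.IsMinimal (DihedralGroup 0) X]
    (hfree : ∀ (g : DihedralGroup 0) (x : X), g • x = x → g = 1) :
    DadLE (DihedralGroup 0) X 1 := by
  intro E
  obtain ⟨N, hN⟩ := exists_forall_abs_coord_le E.finite_toSet
  set B := {c : DihedralGroup 0 | |coord c| ≤ N}
  have hB : B.Finite := finite_setOf_abs_coord_le N
  obtain ⟨V, hVo, ⟨x₀, hx₀⟩, hV⟩ :=
    exists_isOpen_nonempty_disjoint_smul hfree ((hB.inv.mul E.finite_toSet).mul hB)
  obtain ⟨K, hKx₀, hKc, hKV⟩ := exists_mem_nhds_isClosed_subset (hVo.mem_nhds hx₀)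
  obtain ⟨I, hI⟩ := exists_finset_forall_smul_mem (Γ := DihedralGroup 0) isOpen_interior
    ⟨x₀, mem_interior_iff_mem_nhds.2 hKx₀⟩
  obtain ⟨M, hM⟩ := exists_forall_abs_coord_le I.finite_toSet
  have hK : ∀ z : X, ∃ h, |coord h| ≤ M ∧ h • z ∈ K := fun z =>
    let ⟨h, hhI, hz⟩ := hI z
    ⟨h, hM h hhI, interior_subset hz⟩
  have hBK : IsClosed (B • K) := by
    rw [← Set.iUnion_smul_set]
    exact hB.isClosed_biUnion fun c _ => hKc.smul c
  refine ⟨![B • V, (B • K)ᶜ], Fin.forall_fin_two.2 ⟨hVo.smul_left, hBK.isOpen_compl⟩,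
    Set.iUnion_eq_univ_iff.2 fun y => ?_, Fin.forall_fin_two.2
      ⟨(hB.mul hB.inv).subset (dynF_smul_subset_mul_inv hV),
        (finite_setOf_abs_coord_le (2 * M)).subset (dynF_compl_smul_subset hK hN)⟩⟩
  by_cases hy : y ∈ B • K
  · exact ⟨0, Set.smul_subset_smul_left hKV hy⟩
  · exact ⟨1, hy⟩

end DihedralGroup

/-- For a free minimal action of the infinite dihedral group on a nonempty
compact Hausdorff space, the dynamic asymptotic dimension equals 1. -/
theorem dad_eq_one_of_dihedral_free_minimal
    (X : Type*) [TopologicalSpace X] [CompactSpace X] [T2Space X] [Nonempty X]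
    [MulAction (DihedralGroup 0) X] [ContinuousConstSMul (DihedralGroup 0) X]
    (hfree : ∀ (g : DihedralGroup 0) (x : X), g • x = x → g = 1)
    (hmin : ∀ x : X, Dense (MulAction.orbit (DihedralGroup 0) x)) :
    dad (DihedralGroup 0) X = 1 := by
  have : MulAction.IsMinimal (DihedralGroup 0) X := ⟨hmin⟩
  refine dad_eq_one (DihedralGroup.dadLE_one_of_free hfree)
    (not_dadLE_zero_of_not_isOfFinOrder (g := DihedralGroup.r 1) ?_)
  rw [← orderOf_eq_zero_iff, DihedralGroup.orderOf_r_one]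
end

section
/- Let Γ be a group acting freely and minimally by homeomorphisms on a compact Hausdorff space X. Then the action has the marker property: for every finite subset F ⊆ Γ there exists an open set U ⊆ X such that the translates {gU : g ∈ F} are pairwise disjoint and ΓU = X. -/
open Pointwise

/-- A free minimal action of a group on a compact Hausdorff space has the
marker property. -/
theorem markerProperty_of_free_minimal
    (Γ X : Type*) [Group Γ]
    [TopologicalSpace X] [CompactSpace X] [T2Space X]
    [MulAction Γ X] [ContinuousConstSMul Γ X]
    (hfree : ∀ (g : Γ) (x : X), g • x = x → g = 1)
    (hmin : ∀ x : X, Dense (MulAction.orbit Γ x)) :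
    ∀ F : Finset Γ, ∃ U : Set X, IsOpen U ∧
      (F : Set Γ).PairwiseDisjoint (fun g => g • U) ∧ (⋃ g : Γ, g • U) = Set.univ := by
  intro F
  cases isEmpty_or_nonempty X with
  | inl h =>
    refine ⟨∅, isOpen_empty, ?_, ?_⟩
    · intro g _ h' _ _; simp [Function.onFun]
    · ext y; exact isEmptyElim y
  | inr h =>
    obtain ⟨x⟩ := h
    -- the points g • x, g ∈ F, are pairwise distinct
    have hinj : ∀ g ∈ F, ∀ h ∈ F, g • x = h • x → g = h := by
      intro g _ h _ hgh
      have : (h⁻¹ * g) • x = x := by rw [mul_smul, hgh, inv_smul_smul]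
      have := hfree _ _ this
      rw [← mul_one h, ← this, mul_inv_cancel_left]
    -- separate them by disjoint open sets
    obtain ⟨W, hW, hWd⟩ := (F.finite_toSet.image (· • x)).t2_separation
    set V : Set X := ⋂ g ∈ F, g⁻¹ • W (g • x) with hV
    have hxV : x ∈ V := by
      simp only [hV, Set.mem_iInter]
      intro g _
      rw [Set.mem_inv_smul_set_iff]
      exact (hW (g • x)).1
    have hVopen : IsOpen V := by
      apply isOpen_biInter_finset
      intro g _
      exact ((hW (g • x)).2).smul _
    refine ⟨V, hVopen, ?_, ?_⟩
    · intro g hg h' hh' hne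
      have hsub : ∀ k ∈ F, k • V ⊆ W (k • x) := by
        intro k hk y hy
        obtain ⟨z, hz, rfl⟩ := hy
        have := Set.mem_iInter.mp (hV ▸ hz) k
        have := Set.mem_iInter.mp this hk
        rwa [Set.mem_inv_smul_set_iff] at this
      have hne' : g • x ≠ h' • x := fun e => hne (hinj g hg h' hh' e)
      exact Set.disjoint_of_subset (hsub g hg) (hsub h' hh')
        (hWd ⟨g, hg, rfl⟩ ⟨h', hh', rfl⟩ hne')
    · ext y
      simp only [Set.mem_iUnion, Set.mem_univ, iff_true]
      obtain ⟨z, ⟨g, rfl⟩, hz⟩ := (hmin y).exists_mem_open hVopen ⟨x, hxV⟩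
      exact ⟨g⁻¹, g • y, hz, inv_smul_smul g y⟩
end

section
/- Let a group Γ act by homeomorphisms on a compact Hausdorff space X. The action is free if and only if for every γ ∈ Γ with γ ≠ e there is a finite family {φ_i : i ∈ I} of continuous functions φ_i : X → [0,1] with ∑_{i∈I} φ_i = 1 (a partition of unity) such that for all i ∈ I and all x ∈ X, φ_i(γ⁻¹·x) · φ_i(x) = 0 (i.e., (γ·φ_i)·φ_i = 0, where (γ·φ)(x) = φ(γ⁻¹x)). -/
open Pointwise

/-- An action of a group on a compact Hausdorff space is free iff for every
`γ ≠ 1` there is a finite partition of unity `{φᵢ}` of `[0,1]`-valued continuous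
functions with `(γ • φᵢ) · φᵢ = 0`. -/
theorem free_iff_partitionOfUnity
    (Γ X : Type*) [Group Γ]
    [TopologicalSpace X] [CompactSpace X] [T2Space X]
    [MulAction Γ X] [ContinuousConstSMul Γ X] :
    (∀ (g : Γ) (x : X), g • x = x → g = 1) ↔
      ∀ γ : Γ, γ ≠ 1 → ∃ (n : ℕ) (φ : Fin n → C(X, ℝ)),
        (∀ (i : Fin n) (x : X), 0 ≤ φ i x ∧ φ i x ≤ 1) ∧
        (∀ x : X, ∑ i, φ i x = 1) ∧
        (∀ (i : Fin n) (x : X), φ i (γ⁻¹ • x) * φ i x = 0) := by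
  constructor
  · intro hfree γ hγ
    have hcont : Continuous fun y : X => γ⁻¹ • y := continuous_const_smul _
    have key : ∀ x : X, ∃ U : Set X, IsOpen U ∧ x ∈ U ∧ ∀ y ∈ U, γ⁻¹ • y ∉ U := by
      intro x
      have hne : x ≠ γ⁻¹ • x := by
        intro h
        exact hγ (by simpa using inv_eq_one.mp (hfree γ⁻¹ x h.symm))
      obtain ⟨V, W, hV, hW, hxV, hxW, hVW⟩ := t2_separation hne
      refine ⟨V ∩ (fun y : X => γ⁻¹ • y) ⁻¹' W, hV.inter (hW.preimage hcont),
        ⟨hxV, hxW⟩, ?_⟩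
      rintro y ⟨_, hyW⟩ ⟨hyV, _⟩
      exact Set.disjoint_left.mp hVW hyV hyW
    choose U hUo hmemU hU using key
    obtain ⟨t, ht⟩ := isCompact_univ.elim_finite_subcover U hUo
      (fun x _ => Set.mem_iUnion.2 ⟨x, hmemU x⟩)
    set n := t.card with hn
    set e : Fin n → t := fun i => t.equivFin.symm i with he
    set U' : Fin n → Set X := fun i => U (e i) with hU'
    have hU'o : ∀ i, IsOpen (U' i) := fun i => hUo _
    have hcover : (Set.univ : Set X) ⊆ ⋃ i, U' i := by
      intro x _
      obtain ⟨y, hy⟩ := Set.mem_iUnion₂.mp (ht (Set.mem_univ x))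
      exact Set.mem_iUnion.2 ⟨t.equivFin ⟨y, hy.1⟩, by
        simpa [hU', he] using hy.2⟩
    obtain ⟨f, hsub⟩ := PartitionOfUnity.exists_isSubordinate isClosed_univ U' hU'o hcover
    refine ⟨n, fun i => f i, ?_, ?_, ?_⟩
    · intro i x
      refine ⟨f.nonneg i x, ?_⟩
      exact f.le_one i x
    · intro x
      have := f.sum_eq_one (Set.mem_univ x)
      rwa [finsum_eq_sum_of_fintype] at this
    · intro i x
      by_contra h
      have h1 : f i (γ⁻¹ • x) ≠ 0 := fun h0 => h (by simp [h0])
      have h2 : f i x ≠ 0 := fun h0 => h (by simp [h0])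
      have hx : x ∈ U' i := hsub i (subset_tsupport _ h2)
      have hx' : γ⁻¹ • x ∈ U' i := hsub i (subset_tsupport _ h1)
      exact hU _ x hx hx'
  · intro h g x hgx
    by_contra hg
    obtain ⟨n, φ, h01, hsum, hzero⟩ := h g hg
    have hfix : g⁻¹ • x = x := by
      conv_lhs => rw [← hgx]
      simp
    have hzero' : ∀ i : Fin n, φ i x = 0 := by
      intro i
      have := hzero i x
      rw [hfix] at this
      exact mul_self_eq_zero.mp this
    have := hsum x
    simp [hzero'] at this
end

section
/- Let Γ be a countable group acting freely by homeomorphisms on a compact Hausdorff space X. Then there exists a countable set S ⊆ C(X, ℝ) of continuous functions with the following property: for every compact Hausdorff space Y carrying an action of Γ by homeomorphisms and every continuous Γ-equivariant surjection p : X → Y such that every f ∈ S is of the form g ∘ p for some continuous g : Y → ℝ, the action of Γ on Y is free. -/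
open Pointwise

/-- For a free action of a countable group on a compact Hausdorff space
there is a countable set `S` of continuous functions such that any factor through which
all functions of `S` pass is again a free `Γ`-space. -/
theorem exists_countable_witness_of_freeness
    (Γ X : Type*) [Group Γ] [Countable Γ]
    [TopologicalSpace X] [CompactSpace X] [T2Space X]
    [MulAction Γ X] [ContinuousConstSMul Γ X]
    (hfree : ∀ (g : Γ) (x : X), g • x = x → g = 1) :
    ∃ S : Set C(X, ℝ), S.Countable ∧
      ∀ (Y : Type*) [TopologicalSpace Y] [CompactSpace Y] [T2Space Y]
        [MulAction Γ Y] [ContinuousConstSMul Γ Y],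
        ∀ p : X → Y, Continuous p → Function.Surjective p →
        (∀ (g : Γ) (x : X), p (g • x) = g • p x) →
        (∀ f ∈ S, ∃ g : C(Y, ℝ), (f : X → ℝ) = g ∘ p) →
        ∀ (γ : Γ) (y : Y), γ • y = y → γ = 1 := by
  have key : ∀ g : Γ, ∃ T : Finset C(X, ℝ), g ≠ 1 → ∀ x : X, ∃ f ∈ T, f x ≠ f (g • x) := by
    intro g
    by_cases hg : g = 1
    · exact ⟨∅, fun h => absurd hg h⟩
    have hcov : Set.univ ⊆ ⋃ f : C(X, ℝ), {x | f x ≠ f (g • x)} := by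
      intro x _
      simp only [Set.mem_iUnion, Set.mem_setOf_eq]
      have hne : x ≠ g • x := fun h => hg (hfree g x h.symm)
      obtain ⟨f, hf0, hf1, -⟩ := exists_continuous_zero_one_of_isClosed
        (isClosed_singleton (x := x)) (isClosed_singleton (x := g • x))
        (by simpa [Set.disjoint_singleton] using hne)
      refine ⟨f, ?_⟩
      rw [hf0 rfl, hf1 rfl]
      norm_num
    obtain ⟨T, hT⟩ := IsCompact.elim_finite_subcover isCompact_univ
      (fun f : C(X, ℝ) => {x | f x ≠ f (g • x)})
      (fun f => isOpen_ne_fun f.continuous (f.continuous.comp (continuous_const_smul g)))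
      hcov
    refine ⟨T, fun _ x => ?_⟩
    have := hT (Set.mem_univ x)
    simpa only [Set.mem_iUnion, Set.mem_setOf_eq, exists_prop] using this
  choose T hT using key
  refine ⟨⋃ g : Γ, ↑(T g), Set.countable_iUnion (fun g => (T g).countable_toSet), ?_⟩
  intro Y _ _ _ _ _ p hp hsurj hequiv hfactor γ y hfix
  by_contra hγ
  obtain ⟨x, rfl⟩ := hsurj y
  obtain ⟨f, hfT, hfne⟩ := hT γ hγ x
  obtain ⟨h, hh⟩ := hfactor f (Set.mem_iUnion.mpr ⟨γ, hfT⟩)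
  apply hfne
  calc f x = h (p x) := by rw [hh]; rfl
    _ = h (γ • p x) := by rw [hfix]
    _ = h (p (γ • x)) := by rw [hequiv]
    _ = f (γ • x) := by rw [hh]; rfl
end

section
/- Let q : Γ → Λ be a surjective group homomorphism with finite kernel, let Γ act by homeomorphisms on a topological space X, let Λ act by homeomorphisms on a topological space Y, and let p : X → Y be a continuous surjection satisfying p(g·x) = q(g)·p(x) for all g ∈ Γ, x ∈ X. Then for every d ∈ ℕ: if for every finite subset E' ⊆ Λ there is a cover of Y by d+1 open sets V_0,…,V_d with F(V_i, E') finite for each i, then for every finite subset E ⊆ Γ there is a cover of X by d+1 open sets U_0,…,U_d with F(U_i, E) finite for each i. In particular, if K is a finite normal subgroup of Γ, then dad(Γ↷X) ≤ dad(Γ/K ↷ X/K). -/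
open Pointwise

/-- Dynamic asymptotic dimension does not increase when passing to a
quotient by a finite kernel: if `q : Γ → Λ` is surjective with finite kernel and
`p : X → Y` is a continuous equivariant surjection, then a `(d+1)`-fold cover witnessing
`dad ≤ d` for `Λ ↷ Y` yields one for `Γ ↷ X`. -/
theorem dadLE_of_quotient_by_finite_kernel
    (Γ Λ X Y : Type*) [Group Γ] [Group Λ]
    [TopologicalSpace X] [TopologicalSpace Y]
    [MulAction Γ X] [MulAction Λ Y]
    [ContinuousConstSMul Γ X] [ContinuousConstSMul Λ Y]
    (q : Γ →* Λ) (hq : Function.Surjective q) (hker : (q.ker : Set Γ).Finite)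
    (p : X → Y) (hpc : Continuous p) (hps : Function.Surjective p)
    (hequiv : ∀ (g : Γ) (x : X), p (g • x) = q g • p x) :
    ∀ d : ℕ,
      (∀ E' : Finset Λ, ∃ V : Fin (d + 1) → Set Y, (∀ i, IsOpen (V i)) ∧
        (⋃ i, V i) = Set.univ ∧ ∀ i, (dynF (V i) (E' : Set Λ)).Finite) →
      (∀ E : Finset Γ, ∃ U : Fin (d + 1) → Set X, (∀ i, IsOpen (U i)) ∧
        (⋃ i, U i) = Set.univ ∧ ∀ i, (dynF (U i) (E : Set Γ)).Finite) := by
  intro d hY E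
  classical
  -- choose a cover for the image finite set
  obtain ⟨V, hVopen, hVcov, hVfin⟩ := hY (E.image q)
  refine ⟨fun i => p ⁻¹' V i, fun i => (hVopen i).preimage hpc, ?_, ?_⟩
  · ext x
    simp only [Set.mem_iUnion, Set.mem_preimage, Set.mem_univ, iff_true]
    have : p x ∈ ⋃ i, V i := hVcov ▸ Set.mem_univ _
    simpa using this
  · intro i
    -- dynF (p⁻¹ V i) E ⊆ q ⁻¹' dynF (V i) (q '' E)
    have hsub : dynF (p ⁻¹' V i) (E : Set Γ) ⊆ q ⁻¹' (dynF (V i) ((E.image q : Finset Λ) : Set Λ)) := by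
      rintro g ⟨L, hLne, hLE, hg, x, hxU, hx⟩
      refine ⟨L.map q, by simpa using hLne, ?_, ?_, p x, hxU, ?_⟩
      · intro h hh
        obtain ⟨a, ha, rfl⟩ := List.mem_map.mp hh
        simp only [Finset.coe_image, Set.mem_image]
        exact ⟨a, hLE a ha, rfl⟩
      · rw [hg, ← List.map_reverse, ← map_list_prod]
      · intro j hj1 hj2
        rw [List.length_map] at hj2
        have := hx j hj1 hj2
        have key : ((L.map q).take j).reverse.prod • p x = p ((L.take j).reverse.prod • x) := by
          rw [hequiv, ← List.map_take, ← List.map_reverse, ← map_list_prod]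
        rw [key]
        exact this
    -- preimage of finite under q is finite since ker finite
    have hpre : ∀ S : Set Λ, S.Finite → (q ⁻¹' S).Finite := by
      intro S hS
      have : q ⁻¹' S = ⋃ s ∈ S, q ⁻¹' {s} := by
        ext g; simp
      rw [this]
      refine hS.biUnion ?_
      intro s _
      obtain ⟨g0, rfl⟩ := hq s
      have : q ⁻¹' {q g0} ⊆ (fun k => g0 * k) '' (q.ker : Set Γ) := by
        intro h hh
        refine ⟨g0⁻¹ * h, ?_, by group⟩
        simp only [SetLike.mem_coe, MonoidHom.mem_ker, map_mul, map_inv]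
        rw [Set.mem_preimage, Set.mem_singleton_iff] at hh
        rw [hh]; group
      exact ((hker.image _)).subset this
    exact (hpre _ (hVfin i)).subset hsub
end

section
/- Let a group Γ act by homeomorphisms on a nonempty topological space X, and suppose the dynamic asymptotic dimension of the action is 0, i.e., for every finite subset E ⊆ Γ there is an open set U_0 covering X (equivalently U_0 = X) with F(U_0, E) finite. Then Γ is locally finite: every finitely generated subgroup of Γ is finite. -/
open Pointwise

/-- If an action on a nonempty space has dynamic asymptotic dimension 0
(a one-set open cover with finite `F(U₀,E)` exists for each finite `E`), then the group
is locally finite. -/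
theorem locallyFinite_of_dad_zero
    (Γ X : Type*) [Group Γ] [TopologicalSpace X] [Nonempty X]
    [MulAction Γ X] [ContinuousConstSMul Γ X]
    (h : ∀ E : Finset Γ, ∃ U₀ : Set X, IsOpen U₀ ∧ U₀ = Set.univ ∧
      (dynF U₀ (E : Set Γ)).Finite) :
    ∀ S : Finset Γ, ((Subgroup.closure (S : Set Γ) : Subgroup Γ) : Set Γ).Finite := by
  classical
  intro S
  set E : Finset Γ := (S ∪ S⁻¹) ∪ {1} with hE
  obtain ⟨U₀, -, hU, hfin⟩ := h E
  subst hU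
  have h1 : (1 : Γ) ∈ E := by simp [hE]
  have key : ((Subgroup.closure (S : Set Γ) : Subgroup Γ) : Set Γ)
      ⊆ dynF (Set.univ : Set X) (E : Set Γ) := by
    intro g hg
    have hg' : g ∈ Submonoid.closure ((S : Set Γ) ∪ (S : Set Γ)⁻¹) := by
      rw [← Subgroup.closure_toSubmonoid]; exact hg
    obtain ⟨l, hl, hprod⟩ := Submonoid.exists_list_of_mem_closure hg'
    refine ⟨(1 :: l).reverse, by simp, ?_, ?_, Classical.arbitrary X, trivial,
      fun j _ _ => trivial⟩
    · intro x hx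
      rw [List.mem_reverse] at hx
      rcases List.mem_cons.mp hx with rfl | hx
      · exact h1
      · rcases Set.mem_union _ _ _ |>.mp (hl x hx) with h' | h'
        · simp [hE, h']
        · simp only [hE, Finset.coe_union, Finset.coe_inv, Set.mem_union]
          left; right; exact h'
    · simp [hprod.symm]
  exact hfin.subset key
end

section
/- Let a group Γ act by homeomorphisms on a topological space X and suppose there exists d ∈ ℕ such that for every finite subset E ⊆ Γ there is a cover of X by d+1 open sets U_0,…,U_d with F(U_i, E) finite for each i. Then for every x ∈ X the stabiliser subgroup Stab(x) = {g ∈ Γ : g·x = x} is locally finite. In particular, if Γ is torsion-free (e.g., Γ = ℤ), the action is free. -/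
open Pointwise

/-! If every element of a finite symmetric set `E` fixes `x`, then every word in `E` keeps `x`
where it is, so all of these words except the empty one lie in `F(U,E)` for any `U ∋ x`.
Taking for `U` the member of the cover for `E` that contains `x`, the subgroup generated by `E`
is finite. -/

open MulAction

section DynF

variable {Γ X : Type*} [Group Γ] [MulAction Γ X] {U : Set X} {E : Set Γ} {x : X}

theorem reverse_prod_mem_dynF (hx : x ∈ U) (hE : E ⊆ stabilizer Γ x) {L : List Γ}
    (hL : L ≠ []) (hLE : ∀ h ∈ L, h ∈ E) : L.reverse.prod ∈ dynF U E := by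
  refine ⟨L, hL, hLE, rfl, x, hx, fun j _ _ => ?_⟩
  have hmem : (L.take j).reverse.prod ∈ stabilizer Γ x :=
    Subgroup.list_prod_mem _ fun h hh =>
      hE (hLE h (List.mem_of_mem_take (List.mem_reverse.mp hh)))
  rwa [mem_stabilizer_iff.mp hmem]

theorem submonoidClosure_subset_insert_one_dynF (hx : x ∈ U) (hE : E ⊆ stabilizer Γ x) :
    (Submonoid.closure E : Set Γ) ⊆ insert 1 (dynF U E) := by
  intro g hg
  obtain ⟨l, hlE, rfl⟩ := Submonoid.exists_list_of_mem_closure hg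
  rcases eq_or_ne l [] with rfl | hne
  · exact Set.mem_insert 1 _
  · refine Set.mem_insert_of_mem 1 ?_
    simpa using reverse_prod_mem_dynF hx hE (L := l.reverse) (by simpa using hne)
      (fun h hh => hlE h (List.mem_reverse.mp hh))

end DynF

section Stabilizer

variable {Γ X : Type*} [Group Γ] [MulAction Γ X] [TopologicalSpace X] {d : ℕ}

theorem DadLE.finite_closure_of_subset_stabilizer (hd : DadLE Γ X d) {x : X} (S : Finset Γ)
    (hS : (S : Set Γ) ⊆ stabilizer Γ x) : (Subgroup.closure (S : Set Γ) : Set Γ).Finite := by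
  classical
  obtain ⟨U, -, hUcov, hUfin⟩ := hd (S ∪ S⁻¹)
  obtain ⟨i, hxi⟩ := Set.mem_iUnion.mp (hUcov ▸ Set.mem_univ x)
  have hE : (S : Set Γ) ∪ (S : Set Γ)⁻¹ ⊆ stabilizer Γ x :=
    Set.union_subset hS (by rw [Set.inv_subset, inv_coe_set]; exact hS)
  have hsub := submonoidClosure_subset_insert_one_dynF hxi hE
  rw [← Finset.coe_inv, ← Finset.coe_union] at hsub
  rw [← Subgroup.coe_toSubmonoid, Subgroup.closure_toSubmonoid, ← Finset.coe_inv,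
    ← Finset.coe_union]
  exact ((hUfin i).insert 1).subset hsub

theorem DadLE.isOfFinOrder_of_smul_eq_self (hd : DadLE Γ X d) {g : Γ} {x : X}
    (hgx : g • x = x) : IsOfFinOrder g := by
  have hfin := hd.finite_closure_of_subset_stabilizer {g} (x := x) (by simpa using hgx)
  rw [Finset.coe_singleton, ← Subgroup.zpowers_eq_closure] at hfin
  exact finite_zpowers.mp hfin

end Stabilizer

theorem stabilizer_locallyFinite_of_dad_finite_general
    (Γ X : Type*) [Group Γ] [TopologicalSpace X]
    [MulAction Γ X]
    (h : ∃ d : ℕ, DadLE Γ X d) :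
    (∀ x : X, ∀ S : Finset Γ, (∀ g ∈ S, g • x = x) →
      ((Subgroup.closure (S : Set Γ) : Subgroup Γ) : Set Γ).Finite) ∧
    ((∀ g : Γ, IsOfFinOrder g → g = 1) →
      ∀ (g : Γ) (x : X), g • x = x → g = 1) := by
  obtain ⟨d, hd⟩ := h
  exact ⟨fun x S hS => hd.finite_closure_of_subset_stabilizer S hS,
    fun htf g x hgx => htf g (hd.isOfFinOrder_of_smul_eq_self hgx)⟩

/-- Finiteness of the dynamic asymptotic dimension forces all point
stabilisers to be locally finite; in particular torsion-free groups act freely. -/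
theorem stabilizer_locallyFinite_of_dad_finite
    (Γ X : Type*) [Group Γ] [TopologicalSpace X]
    [MulAction Γ X] [ContinuousConstSMul Γ X]
    (h : ∃ d : ℕ, DadLE Γ X d) :
    (∀ x : X, ∀ S : Finset Γ, (∀ g ∈ S, g • x = x) →
      ((Subgroup.closure (S : Set Γ) : Subgroup Γ) : Set Γ).Finite) ∧
    ((∀ g : Γ, IsOfFinOrder g → g = 1) →
      ∀ (g : Γ) (x : X), g • x = x → g = 1) :=
  stabilizer_locallyFinite_of_dad_finite_general Γ X h
end
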